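/- arXiv:2303.12247 — 2 statements merged into one kernel-verified Lean document; each statement's English description precedes it below -/
import Mathlib

section
/- If a randomized mechanism M satisfies (α, ε)-Rényi differential privacy for some α > 1, then for any δ ∈ (0,1), M satisfies (ε + log(1/δ)/(α−1), δ)-differential privacy. -/
/-!
Split the event `S` along the privacy-loss threshold `p x > e^t q x`. Off the threshold the
`e^t`-multiplicative bound holds pointwise. On it, each term of the Rényi moment
`∑ p^α q^(1-α) = ∑ p (p/q)^(α-1)` is at least `e^{(α-1)t} p x`, so by the RDP bound
(a Markov inequality for the privacy loss) the mass there is at most `e^{(α-1)(ε-t)}`,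
which equals `δ` for `t = ε + log(1/δ)/(α-1)`.
-/

open Finset Real

namespace RenyiDP

lemma sum_le_mul_sum_add_sum_filter_lt {ι : Type*} (S : Finset ι) (p q : ι → ℝ) {c : ℝ}
    (hc : 0 ≤ c) (hq : ∀ x ∈ S, 0 ≤ q x) :
    ∑ x ∈ S, p x ≤ c * ∑ x ∈ S, q x + ∑ x ∈ S with c * q x < p x, p x := by
  rw [← sum_filter_not_add_sum_filter S (fun x => c * q x < p x) p]
  gcongr
  calc ∑ x ∈ S with ¬c * q x < p x, p x
      ≤ ∑ x ∈ S with ¬c * q x < p x, c * q x :=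
        sum_le_sum fun x hx => not_lt.1 (mem_filter.1 hx).2
    _ = c * ∑ x ∈ S with ¬c * q x < p x, q x := (mul_sum _ _ _).symm
    _ ≤ c * ∑ x ∈ S, q x :=
        mul_le_mul_of_nonneg_left
          (sum_le_sum_of_subset_of_nonneg (filter_subset _ _) fun x hx _ => hq x hx) hc

lemma rpow_mul_rpow_one_sub_eq {a b : ℝ} (ha : 0 < a) (hb : 0 < b) (α : ℝ) :
    a ^ α * b ^ (1 - α) = a * (a / b) ^ (α - 1) := by
  rw [div_rpow ha.le hb.le, rpow_sub_one ha.ne', show 1 - α = -(α - 1) by ring,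
    rpow_neg hb.le]
  field_simp

lemma exp_mul_le_rpow_mul_rpow {a b t α : ℝ} (hα : 1 ≤ α) (hb : 0 ≤ b)
    (hab : b = 0 → a = 0) (h : exp t * b < a) :
    exp ((α - 1) * t) * a ≤ a ^ α * b ^ (1 - α) := by
  have hb : 0 < b := hb.lt_of_ne fun h0 => by simp [← h0, hab h0.symm] at h
  have ha : 0 < a := (mul_pos (exp_pos t) hb).trans h
  rw [rpow_mul_rpow_one_sub_eq ha hb, mul_comm (α - 1), exp_mul, mul_comm]
  gcongr
  exact (le_div_iff₀ hb).2 h.le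

lemma le_exp_mul_of_one_div_mul_log_le {K a ε : ℝ} (hK : 0 ≤ K) (ha : 0 < a)
    (h : 1 / a * log K ≤ ε) : K ≤ exp (a * ε) := by
  rcases hK.eq_or_lt with rfl | hK
  · exact (exp_pos _).le
  rw [← exp_log hK, exp_le_exp]
  rwa [one_div, inv_mul_le_iff₀ ha] at h

variable {Ω : Type*} [Fintype Ω] {p q : Ω → ℝ} {α : ℝ}

lemma exp_mul_sum_filter_lt_le_sum_rpow_mul_rpow (hα : 1 ≤ α) (hp : ∀ x, 0 ≤ p x)
    (hq : ∀ x, 0 ≤ q x) (hpq : ∀ x, q x = 0 → p x = 0) (t : ℝ) (S : Finset Ω) :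
    exp ((α - 1) * t) * ∑ x ∈ S with exp t * q x < p x, p x
      ≤ ∑ x, p x ^ α * q x ^ (1 - α) :=
  calc exp ((α - 1) * t) * ∑ x ∈ S with exp t * q x < p x, p x
      ≤ ∑ x ∈ S with exp t * q x < p x, p x ^ α * q x ^ (1 - α) := by
        rw [mul_sum]
        exact sum_le_sum fun x hx =>
          exp_mul_le_rpow_mul_rpow hα (hq x) (hpq x) (mem_filter.1 hx).2
    _ ≤ ∑ x, p x ^ α * q x ^ (1 - α) :=
        sum_le_univ_sum_of_nonneg fun x => by have := hp x; have := hq x; positivity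

lemma sum_le_exp_mul_sum_add_of_sum_rpow_mul_rpow_le (hα : 1 < α) (hp : ∀ x, 0 ≤ p x)
    (hq : ∀ x, 0 ≤ q x) (hpq : ∀ x, q x = 0 → p x = 0) {ε δ : ℝ} (hδ : 0 < δ)
    (hK : ∑ x, p x ^ α * q x ^ (1 - α) ≤ exp ((α - 1) * ε)) (S : Finset Ω) :
    ∑ x ∈ S, p x ≤ exp (ε + log (1 / δ) / (α - 1)) * ∑ x ∈ S, q x + δ := by
  set t := ε + log (1 / δ) / (α - 1)
  have hexponent : (α - 1) * t = (α - 1) * ε + log (1 / δ) := by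
    simp only [t]
    field_simp [(sub_pos.2 hα).ne']
  have hexp : exp ((α - 1) * t) = exp ((α - 1) * ε) / δ := by
    rw [hexponent, exp_add, exp_log (by positivity), mul_one_div]
  have htail : ∑ x ∈ S with exp t * q x < p x, p x ≤ δ := by
    have := (exp_mul_sum_filter_lt_le_sum_rpow_mul_rpow hα.le hp hq hpq t S).trans hK
    rwa [hexp, div_mul_eq_mul_div, div_le_iff₀ hδ, mul_le_mul_iff_right₀ (exp_pos _)] at this
  calc ∑ x ∈ S, p x ≤ exp t * ∑ x ∈ S, q x + ∑ x ∈ S with exp t * q x < p x, p x :=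
        sum_le_mul_sum_add_sum_filter_lt S p q (exp_pos t).le fun x _ => hq x
    _ ≤ exp t * ∑ x ∈ S, q x + δ := by gcongr

end RenyiDP

open RenyiDP in
theorem rdp_to_dp_general
    {Dset : Type*} {Ω : Type*} [Fintype Ω]
    (Neigh : Dset → Dset → Prop)
    (M : Dset → Ω → ℝ)
    (hpos : ∀ D x, 0 ≤ M D x)
    (hac : ∀ D D', Neigh D D' → ∀ x, M D' x = 0 → M D x = 0)
    (α ε : ℝ) (hα : 1 < α)
    (hRDP : ∀ D D', Neigh D D' →
      (1 / (α - 1)) * Real.log (∑ x, M D x ^ α * M D' x ^ (1 - α)) ≤ ε)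
    (δ : ℝ) (hδ : δ ∈ Set.Ioo (0 : ℝ) 1) :
    ∀ D D', Neigh D D' → ∀ S : Finset Ω,
      ∑ x ∈ S, M D x ≤
        Real.exp (ε + Real.log (1 / δ) / (α - 1)) * ∑ x ∈ S, M D' x + δ := by
  intro D D' hN
  have hmoment : 0 ≤ ∑ x, M D x ^ α * M D' x ^ (1 - α) :=
    sum_nonneg fun x _ => by have := hpos D x; have := hpos D' x; positivity
  exact sum_le_exp_mul_sum_add_of_sum_rpow_mul_rpow_le hα (hpos D) (hpos D') (hac D D' hN) hδ.1
    (le_exp_mul_of_one_div_mul_log_le hmoment (sub_pos.2 hα) (hRDP D D' hN))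

/-- **RDP to DP conversion.** If a randomized mechanism `M` (with discrete output
distributions over a finite type `Ω`) satisfies `(α, ε)`-Rényi differential privacy
for some `α > 1`, then for any `δ ∈ (0,1)`, `M` satisfies
`(ε + log(1/δ)/(α−1), δ)`-differential privacy. -/
theorem rdp_to_dp
    {Dset : Type*} {Ω : Type*} [Fintype Ω]
    (Neigh : Dset → Dset → Prop)
    (M : Dset → Ω → ℝ)
    (hpos : ∀ D x, 0 ≤ M D x)
    (hsum : ∀ D, ∑ x, M D x = 1)
    (hac : ∀ D D', Neigh D D' → ∀ x, M D' x = 0 → M D x = 0)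
    (α ε : ℝ) (hα : 1 < α)
    (hRDP : ∀ D D', Neigh D D' →
      (1 / (α - 1)) * Real.log (∑ x, M D x ^ α * M D' x ^ (1 - α)) ≤ ε)
    (δ : ℝ) (hδ : δ ∈ Set.Ioo (0 : ℝ) 1) :
    ∀ D D', Neigh D D' → ∀ S : Finset Ω,
      ∑ x ∈ S, M D x ≤
        Real.exp (ε + Real.log (1 / δ) / (α - 1)) * ∑ x ∈ S, M D' x + δ :=
  rdp_to_dp_general Neigh M hpos hac α ε hα hRDP δ hδ
end

section
/- Gaussian mechanism RDP for vector queries: if f maps datasets to ℝᵐ with ℓ₂-sensitivity Δ (i.e., ‖f(D) − f(D')‖₂ ≤ Δ for neighboring D, D'), then releasing f(D) + N(0, σ²I_m) satisfies (α, αΔ²/(2σ²))-RDP for all α > 1. -/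
/-!
The `α`-Rényi integrand of two Gaussians with a common variance is again a Gaussian density,
centred at `αμ + (1 - α)ν`, times the constant `exp (α(α - 1)(μ - ν)² / 2v)`: the exponents are
quadratic in `x` with the same leading coefficient, so completing the square leaves a constant.
For product densities the integral factorises over coordinates, the constants multiply to
`exp (α(α - 1)‖μ - ν‖² / 2v)`, and the Rényi divergence is `α‖μ - ν‖² / 2v ≤ αΔ² / 2σ²`.
-/

open Real MeasureTheory ProbabilityTheory
open scoped NNReal

theorem gaussianPDFReal_rpow_mul_rpow (μ ν : ℝ) (v : ℝ≥0) (α x : ℝ) :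
    gaussianPDFReal μ v x ^ α * gaussianPDFReal ν v x ^ (1 - α) =
      exp (α * (α - 1) * (μ - ν) ^ 2 / (2 * v)) *
        gaussianPDFReal (α * μ + (1 - α) * ν) v x := by
  set c := (√(2 * π * v))⁻¹
  have hc : c ^ α * c ^ (1 - α) = c := by
    rw [← rpow_add' (by positivity) (by norm_num), add_sub_cancel, rpow_one]
  have hexponent : -(x - μ) ^ 2 / (2 * v) * α + -(x - ν) ^ 2 / (2 * v) * (1 - α) =
      α * (α - 1) * (μ - ν) ^ 2 / (2 * v) + -(x - (α * μ + (1 - α) * ν)) ^ 2 / (2 * v) := by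
    ring
  simp only [gaussianPDFReal]
  rw [mul_rpow (by positivity) (exp_nonneg _), mul_rpow (by positivity) (exp_nonneg _),
    ← exp_mul, ← exp_mul]
  calc c ^ α * exp (-(x - μ) ^ 2 / (2 * v) * α) *
        (c ^ (1 - α) * exp (-(x - ν) ^ 2 / (2 * v) * (1 - α)))
      = (c ^ α * c ^ (1 - α)) *
          exp (-(x - μ) ^ 2 / (2 * v) * α + -(x - ν) ^ 2 / (2 * v) * (1 - α)) := by
        rw [exp_add]; ring
    _ = _ := by rw [hc, hexponent, exp_add]; ring

theorem integral_gaussianPDFReal_rpow_mul_rpow (μ ν : ℝ) {v : ℝ≥0} (hv : v ≠ 0) (α : ℝ) :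
    ∫ x, gaussianPDFReal μ v x ^ α * gaussianPDFReal ν v x ^ (1 - α) =
      exp (α * (α - 1) * (μ - ν) ^ 2 / (2 * v)) := by
  simp_rw [gaussianPDFReal_rpow_mul_rpow]
  rw [integral_const_mul, integral_gaussianPDFReal_eq_one _ hv, mul_one]

theorem integral_pi_gaussianPDFReal_rpow_mul_rpow {ι : Type*} [Fintype ι] (μ ν : ι → ℝ)
    {v : ℝ≥0} (hv : v ≠ 0) (α : ℝ) :
    ∫ x : ι → ℝ, (∏ i, gaussianPDFReal (μ i) v (x i)) ^ α *
        (∏ i, gaussianPDFReal (ν i) v (x i)) ^ (1 - α) =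
      exp (α * (α - 1) * (∑ i, (μ i - ν i) ^ 2) / (2 * v)) := by
  have hfactor : ∀ x : ι → ℝ, (∏ i, gaussianPDFReal (μ i) v (x i)) ^ α *
      (∏ i, gaussianPDFReal (ν i) v (x i)) ^ (1 - α) =
        ∏ i, gaussianPDFReal (μ i) v (x i) ^ α * gaussianPDFReal (ν i) v (x i) ^ (1 - α) := by
    intro x
    rw [Finset.prod_mul_distrib, ← finsetProd_rpow _ _ fun i _ ↦ gaussianPDFReal_nonneg _ _ _,
      ← finsetProd_rpow _ _ fun i _ ↦ gaussianPDFReal_nonneg _ _ _]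
  simp_rw [hfactor]
  rw [volume_pi]
  refine (integral_fintype_prod_eq_prod
    fun i y ↦ gaussianPDFReal (μ i) v y ^ α * gaussianPDFReal (ν i) v y ^ (1 - α)).trans ?_
  simp_rw [integral_gaussianPDFReal_rpow_mul_rpow _ _ hv, ← exp_sum, mul_div_assoc,
    Finset.sum_div, Finset.mul_sum]

theorem gaussian_mechanism_vector_rdp_general
    {Dset : Type*} (Neigh : Dset → Dset → Prop)
    (m : ℕ) (f : Dset → Fin m → ℝ) (Δ σ : ℝ) (hσ : 0 < σ)
    (hsens : ∀ D D', Neigh D D' →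
      Real.sqrt (∑ i, (f D i - f D' i) ^ 2) ≤ Δ)
    (α : ℝ) (hα : 1 < α) :
    ∀ D D', Neigh D D' →
      (1 / (α - 1)) * Real.log
        (∫ x : Fin m → ℝ,
          (∏ i, gaussianPDFReal (f D i) ⟨σ ^ 2, sq_nonneg σ⟩ (x i)) ^ α *
          (∏ i, gaussianPDFReal (f D' i) ⟨σ ^ 2, sq_nonneg σ⟩ (x i)) ^ (1 - α))
        ≤ α * Δ ^ 2 / (2 * σ ^ 2) := by
  intro D D' hDD'
  have hv : (⟨σ ^ 2, sq_nonneg σ⟩ : ℝ≥0) ≠ 0 := ne_of_gt (pow_pos hσ 2)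
  have hdist : ∑ i, (f D i - f D' i) ^ 2 ≤ Δ ^ 2 := (sqrt_le_iff.1 (hsens D D' hDD')).2
  rw [integral_pi_gaussianPDFReal_rpow_mul_rpow _ _ hv, log_exp]
  calc 1 / (α - 1) * (α * (α - 1) * (∑ i, (f D i - f D' i) ^ 2) / (2 * σ ^ 2))
      = α * (∑ i, (f D i - f D' i) ^ 2) / (2 * σ ^ 2) := by
        field_simp [(sub_pos.2 hα).ne']
    _ ≤ α * Δ ^ 2 / (2 * σ ^ 2) := by gcongr

/-- **RDP of the Gaussian mechanism for vector-valued queries.** If `f` maps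
datasets to `ℝᵐ` with `ℓ₂`-sensitivity `Δ`, then releasing `f(D) + N(0, σ²I_m)`
(whose output density is the product of one-dimensional Gaussian densities with
means `f(D)_i` and variance `σ²`) satisfies `(α, αΔ²/(2σ²))`-RDP for all `α > 1`. -/
theorem gaussian_mechanism_vector_rdp
    {Dset : Type*} (Neigh : Dset → Dset → Prop)
    (m : ℕ) (f : Dset → Fin m → ℝ) (Δ σ : ℝ) (hσ : 0 < σ) (hΔ : 0 ≤ Δ)
    (hsens : ∀ D D', Neigh D D' →
      Real.sqrt (∑ i, (f D i - f D' i) ^ 2) ≤ Δ)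
    (α : ℝ) (hα : 1 < α) :
    ∀ D D', Neigh D D' →
      (1 / (α - 1)) * Real.log
        (∫ x : Fin m → ℝ,
          (∏ i, gaussianPDFReal (f D i) ⟨σ ^ 2, sq_nonneg σ⟩ (x i)) ^ α *
          (∏ i, gaussianPDFReal (f D' i) ⟨σ ^ 2, sq_nonneg σ⟩ (x i)) ^ (1 - α))
        ≤ α * Δ ^ 2 / (2 * σ ^ 2) :=
  gaussian_mechanism_vector_rdp_general Neigh m f Δ σ hσ hsens α hα
end
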